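/- For every t ∈ (0,T), the second moment of the explicit solution for the fitness f(x) = x² is finite and is given by ∫_ℝ x² u(t,x) dx = σ tan(2σt) + (cos(2σt))^{-2} · (∫_ℝ e^{tan(2σt)y²/(2σ)} y² u₀(y) dy) / (∫_ℝ e^{tan(2σt)y²/(2σ)} u₀(y) dy); this equals the mean fitness f̄(t) = ∫_ℝ x² u(t,x) dx. -/

import Mathlib

open MeasureTheory

/-- The explicit solution of the replicator-mutator equation with fitness `f(x) = x²`. -/
noncomputable def uTrig (σ : ℝ) (u₀ : ℝ → ℝ) (t x : ℝ) : ℝ :=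
  (Real.sqrt (2 * Real.pi * σ * Real.tan (2 * σ * t)))⁻¹
    * Real.exp (Real.tan (2 * σ * t) * x ^ 2 / (2 * σ))
    * (∫ y : ℝ, Real.exp (-(x / Real.cos (2 * σ * t) - y) ^ 2
        / (2 * σ * Real.tan (2 * σ * t))) * u₀ y)
    / (∫ y : ℝ, Real.exp (Real.tan (2 * σ * t) * y ^ 2 / (2 * σ)) * u₀ y)

/-- The maximal existence time `T` for the fitness `f(x) = x²`. -/
noncomputable def Tmax (σ : ℝ) (u₀ : ℝ → ℝ) : ℝ :=
  sSup {t : ℝ | 0 ≤ t ∧ t < Real.pi / (4 * σ) ∧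
    MeasureTheory.Integrable (fun y : ℝ => Real.exp (Real.tan (2 * σ * t) * y ^ 2 / (2 * σ)) * u₀ y)}

/-!
Completing the square with `1 + tan² θ = cos⁻² θ` shows that `u(t, ·)` is a mixture of Gaussian
densities with means `y / cos (2σt)` and common variance `σ tan (2σt)`, mixed with the weight
`e^{tan (2σt) y² / (2σ)} u₀(y)` divided by its total mass. Each Gaussian has second moment
`σ tan (2σt) + y² / cos² (2σt)`, and Tonelli gives the formula. The weighted moments are finite
because some angle `θ ∈ (2σt, π/2)` still has an integrable weight, and
`e^{(tan θ - tan (2σt)) y² / (2σ)}` dominates `y²`.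
-/

open Real ProbabilityTheory
open scoped NNReal

lemma integrable_sq_mul_gaussianPDFReal (m : ℝ) {v : ℝ≥0} (hv : v ≠ 0) :
    Integrable fun x => x ^ 2 * gaussianPDFReal m v x := by
  have h := (memLp_id_gaussianReal (μ := m) (v := v) 2).integrable_sq
  rw [gaussianReal_of_var_ne_zero _ hv, integrable_withDensity_iff_integrable_smul'
    (measurable_gaussianPDF m v) (ae_of_all _ fun _ ↦ gaussianPDF_lt_top)] at h
  simpa [toReal_gaussianPDF, mul_comm] using h

lemma integral_sq_mul_gaussianPDFReal (m : ℝ) {v : ℝ≥0} (hv : v ≠ 0) :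
    ∫ x, x ^ 2 * gaussianPDFReal m v x = v + m ^ 2 := by
  have h := variance_eq_sub (memLp_id_gaussianReal (μ := m) (v := v) 2)
  simp only [variance_id_gaussianReal, id, Pi.pow_apply, integral_id_gaussianReal] at h
  rw [integral_gaussianReal_eq_integral_smul hv] at h
  simp_rw [smul_eq_mul, mul_comm (gaussianPDFReal _ _ _)] at h
  linarith

section GaussianMixture

variable {w m : ℝ → ℝ} {v : ℝ≥0}

lemma integral_sq_mul_mul_gaussianPDFReal (hv : v ≠ 0) (y : ℝ) :
    ∫ x, x ^ 2 * (w y * gaussianPDFReal (m y) v x) = w y * (v + m y ^ 2) := by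
  simp_rw [mul_left_comm _ (w y), integral_const_mul, integral_sq_mul_gaussianPDFReal _ hv]

lemma integrable_sq_mul_mul_gaussianPDFReal_prod (hv : v ≠ 0) (hw : Integrable w)
    (hm : Measurable m) (hwm : Integrable fun y => w y * m y ^ 2) :
    Integrable (fun p : ℝ × ℝ => p.1 ^ 2 * (w p.2 * gaussianPDFReal (m p.2) v p.1))
      (volume.prod volume) := by
  have hmeas : AEStronglyMeasurable
      (fun p : ℝ × ℝ => p.1 ^ 2 * (w p.2 * gaussianPDFReal (m p.2) v p.1)) (volume.prod volume) :=
    (measurable_fst.pow_const 2).aestronglyMeasurable.mul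
      (hw.aestronglyMeasurable.comp_snd.mul (measurable_uncurry_gaussianPDFReal.comp
        ((hm.comp measurable_snd).prodMk (measurable_const.prodMk measurable_fst))).aestronglyMeasurable)
  refine (integrable_prod_iff' hmeas).2 ⟨ae_of_all _ fun y => ?_, ?_⟩
  · simp_rw [mul_left_comm _ (w y)]
    exact (integrable_sq_mul_gaussianPDFReal _ hv).const_mul _
  · have hnorm (y : ℝ) :
        ∫ x, ‖x ^ 2 * (w y * gaussianPDFReal (m y) v x)‖ = |w y| * (v + m y ^ 2) := by
      simp_rw [norm_mul, norm_pow, norm_eq_abs, sq_abs, abs_of_nonneg (gaussianPDFReal_nonneg _ _ _)]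
      exact integral_sq_mul_mul_gaussianPDFReal (w := fun y => |w y|) hv y
    simp_rw [hnorm, mul_add]
    refine (hw.abs.mul_const _).add (hwm.abs.congr (ae_of_all _ fun y => ?_))
    simp only [abs_mul, abs_pow, sq_abs]

lemma integrable_sq_mul_integral_mul_gaussianPDFReal (hv : v ≠ 0) (hw : Integrable w)
    (hm : Measurable m) (hwm : Integrable fun y => w y * m y ^ 2) :
    Integrable fun x => x ^ 2 * ∫ y, w y * gaussianPDFReal (m y) v x := by
  simpa only [integral_const_mul] using
    (integrable_sq_mul_mul_gaussianPDFReal_prod hv hw hm hwm).integral_prod_left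

lemma integral_sq_mul_integral_mul_gaussianPDFReal (hv : v ≠ 0) (hw : Integrable w)
    (hm : Measurable m) (hwm : Integrable fun y => w y * m y ^ 2) :
    ∫ x, x ^ 2 * ∫ y, w y * gaussianPDFReal (m y) v x = ∫ y, w y * (v + m y ^ 2) := by
  simp_rw [← integral_const_mul]
  rw [integral_integral_swap (integrable_sq_mul_mul_gaussianPDFReal_prod hv hw hm hwm)]
  exact integral_congr_ae (ae_of_all _ (integral_sq_mul_mul_gaussianPDFReal hv))

end GaussianMixture

section GaussianWeight

variable {f : ℝ → ℝ} {a b : ℝ}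

lemma integrable_exp_mul_sq_mul_of_le (hab : a ≤ b) (hf : AEStronglyMeasurable f)
    (hb : Integrable fun y => exp (b * y ^ 2) * f y) :
    Integrable fun y => exp (a * y ^ 2) * f y := by
  refine hb.mono (by fun_prop) (ae_of_all _ fun y => ?_)
  simp only [norm_mul, norm_of_nonneg (exp_pos _).le]
  gcongr

lemma integrable_exp_mul_sq_mul_mul_sq_of_lt (hab : a < b) (hf : AEStronglyMeasurable f)
    (hb : Integrable fun y => exp (b * y ^ 2) * f y) :
    Integrable fun y => exp (a * y ^ 2) * f y * y ^ 2 := by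
  have hδ : 0 < b - a := sub_pos.2 hab
  refine (hb.const_mul (b - a)⁻¹).mono (by fun_prop) (ae_of_all _ fun y => ?_)
  have hsq : y ^ 2 ≤ (b - a)⁻¹ * exp ((b - a) * y ^ 2) := by
    rw [le_inv_mul_iff₀ hδ]
    linarith [add_one_le_exp ((b - a) * y ^ 2)]
  calc ‖exp (a * y ^ 2) * f y * y ^ 2‖ = exp (a * y ^ 2) * y ^ 2 * ‖f y‖ := by
        simp only [norm_mul, norm_pow, norm_eq_abs, sq_abs, abs_of_pos (exp_pos _)]
        ring
    _ ≤ exp (a * y ^ 2) * ((b - a)⁻¹ * exp ((b - a) * y ^ 2)) * ‖f y‖ := by gcongr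
    _ = ‖(b - a)⁻¹ * (exp (b * y ^ 2) * f y)‖ := by
        rw [norm_mul, norm_mul, norm_of_nonneg (inv_pos.2 hδ).le, norm_of_nonneg (exp_pos _).le,
          show b * y ^ 2 = a * y ^ 2 + (b - a) * y ^ 2 by ring, exp_add]
        ring

lemma integral_le_integral_exp_mul_sq_mul (ha : 0 ≤ a) (hf0 : ∀ y, 0 ≤ f y) (hf : Integrable f)
    (ha' : Integrable fun y => exp (a * y ^ 2) * f y) :
    ∫ y, f y ≤ ∫ y, exp (a * y ^ 2) * f y :=
  integral_mono hf ha' fun y => le_mul_of_one_le_left (hf0 y) (one_le_exp (by positivity))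

end GaussianWeight

lemma cos_ne_zero_of_tan_ne_zero {θ : ℝ} (h : tan θ ≠ 0) : cos θ ≠ 0 := by
  contrapose! h
  rw [tan_eq_sin_div_cos, h, div_zero]

lemma exp_tan_mul_sq_mul_exp_eq (σ θ x y : ℝ) (hσ : σ ≠ 0) (htan : tan θ ≠ 0) :
    exp (tan θ * x ^ 2 / (2 * σ)) * exp (-(x / cos θ - y) ^ 2 / (2 * σ * tan θ))
      = exp (tan θ * y ^ 2 / (2 * σ)) * exp (-(x - y / cos θ) ^ 2 / (2 * (σ * tan θ))) := by
  have hcos := cos_ne_zero_of_tan_ne_zero htan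
  have hsec : (1 + tan θ ^ 2) * cos θ ^ 2 = 1 := by
    rw [← inv_one_add_tan_sq hcos, mul_inv_cancel₀ (by positivity)]
  rw [← exp_add, ← exp_add]
  congr 1
  field_simp
  linear_combination (x ^ 2 - y ^ 2) * hsec

lemma uTrig_eq_integral_mul_gaussianPDFReal {σ t : ℝ} (u₀ : ℝ → ℝ) (hσ : 0 < σ)
    (htan : 0 < tan (2 * σ * t)) (x : ℝ) :
    uTrig σ u₀ t x
      = (∫ y, exp (tan (2 * σ * t) * y ^ 2 / (2 * σ)) * u₀ y
          * gaussianPDFReal (y / cos (2 * σ * t)) (σ * tan (2 * σ * t)).toNNReal x)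
        / ∫ y, exp (tan (2 * σ * t) * y ^ 2 / (2 * σ)) * u₀ y := by
  rw [uTrig, ← integral_const_mul]
  congr 1
  refine integral_congr_ae (ae_of_all _ fun y => ?_)
  simp only [gaussianPDFReal, coe_toNNReal _ (mul_pos hσ htan).le]
  rw [← mul_assoc (2 * π)]
  linear_combination (√(2 * π * σ * tan (2 * σ * t)))⁻¹ * u₀ y
    * exp_tan_mul_sq_mul_exp_eq σ _ x y hσ.ne' htan.ne'

lemma integral_mul_add_div_sq {w : ℝ → ℝ} (v c : ℝ) (hw : Integrable w)
    (hw₂ : Integrable fun y => w y * y ^ 2) :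
    ∫ y, w y * (v + (y / c) ^ 2) = v * (∫ y, w y) + (c ^ 2)⁻¹ * ∫ y, w y * y ^ 2 := by
  rw [← integral_const_mul, ← integral_const_mul, ← integral_add (hw.const_mul _) (hw₂.const_mul _)]
  congr 1 with y
  ring

lemma exists_integrable_of_lt_Tmax {σ t : ℝ} {u₀ : ℝ → ℝ} (hσ : 0 < σ) (ht : 0 ≤ t)
    (hT : t < Tmax σ u₀) :
    ∃ θ, 2 * σ * t < θ ∧ θ < π / 2 ∧
      Integrable fun y => exp (tan θ * y ^ 2 / (2 * σ)) * u₀ y := by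
  rw [Tmax] at hT
  obtain ⟨s, ⟨-, hs, hint⟩, hts⟩ := exists_lt_of_lt_csSup
    (Set.nonempty_iff_ne_empty.2 fun h => by rw [h, Real.sSup_empty] at hT; linarith) hT
  refine ⟨2 * σ * s, by gcongr, ?_, hint⟩
  rw [lt_div_iff₀ (by positivity)] at hs
  linarith

theorem second_moment_of_explicit_solution_pos_quadratic_general
    (σ : ℝ) (hσ : 0 < σ) (u₀ : ℝ → ℝ)
    (hnn : ∀ x, 0 ≤ u₀ x) (hmass : ∫ y : ℝ, u₀ y = 1)
    (t : ℝ) (ht : 0 < t) (ht' : t < Tmax σ u₀) :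
    Integrable (fun x : ℝ => x ^ 2 * uTrig σ u₀ t x) ∧
    (∫ x : ℝ, x ^ 2 * uTrig σ u₀ t x)
      = σ * Real.tan (2 * σ * t)
        + ((Real.cos (2 * σ * t)) ^ 2)⁻¹
          * (∫ y : ℝ, Real.exp (Real.tan (2 * σ * t) * y ^ 2 / (2 * σ)) * y ^ 2 * u₀ y)
          / (∫ y : ℝ, Real.exp (Real.tan (2 * σ * t) * y ^ 2 / (2 * σ)) * u₀ y) := by
  obtain ⟨θ, hθt, hθ, hint⟩ := exists_integrable_of_lt_Tmax hσ ht.le ht'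
  have ht₀ : 0 < 2 * σ * t := by positivity
  have htan : 0 < tan (2 * σ * t) := tan_pos_of_pos_of_lt_pi_div_two ht₀ (hθt.trans hθ)
  have htan_lt : tan (2 * σ * t) / (2 * σ) < tan θ / (2 * σ) := by
    gcongr; exact tan_lt_tan_of_nonneg_of_lt_pi_div_two ht₀.le hθ hθt
  have hv : (σ * tan (2 * σ * t)).toNNReal ≠ 0 := by simpa using mul_pos hσ htan
  have hm : Measurable fun y => y / cos (2 * σ * t) := by fun_prop
  simp_rw [uTrig_eq_integral_mul_gaussianPDFReal u₀ hσ htan, mul_div_assoc']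
  simp_rw [mul_div_right_comm _ (_ ^ 2) (2 * σ)] at hint ⊢
  -- a non-integrable function has Bochner integral `0`, not `1`
  have hu₀ : Integrable u₀ := Integrable.of_integral_ne_zero (by simp [hmass])
  have hw := integrable_exp_mul_sq_mul_of_le htan_lt.le hu₀.aestronglyMeasurable hint
  have hw₂ := integrable_exp_mul_sq_mul_mul_sq_of_lt htan_lt hu₀.aestronglyMeasurable hint
  have hwm : Integrable fun y => exp (tan (2 * σ * t) / (2 * σ) * y ^ 2) * u₀ y
      * (y / cos (2 * σ * t)) ^ 2 := by
    simpa only [div_pow, mul_div_assoc'] using hw₂.div_const (cos (2 * σ * t) ^ 2)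
  have hZ : 1 ≤ ∫ y, exp (tan (2 * σ * t) / (2 * σ) * y ^ 2) * u₀ y :=
    hmass ▸ integral_le_integral_exp_mul_sq_mul (by positivity) hnn hu₀ hw
  refine ⟨(integrable_sq_mul_integral_mul_gaussianPDFReal hv hw hm hwm).div_const _, ?_⟩
  rw [integral_div, integral_sq_mul_integral_mul_gaussianPDFReal hv hw hm hwm,
    coe_toNNReal _ (mul_pos hσ htan).le, integral_mul_add_div_sq _ _ hw hw₂]
  simp_rw [mul_right_comm _ (_ ^ 2) (u₀ _)]
  rw [add_div, mul_div_cancel_right₀ _ (by linarith)]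

theorem second_moment_of_explicit_solution_pos_quadratic
    (σ : ℝ) (hσ : 0 < σ) (u₀ : ℝ → ℝ) (hmeas : Measurable u₀)
    (hnn : ∀ x, 0 ≤ u₀ x) (hmass : ∫ y : ℝ, u₀ y = 1)
    (t : ℝ) (ht : 0 < t) (ht' : t < Tmax σ u₀) :
    Integrable (fun x : ℝ => x ^ 2 * uTrig σ u₀ t x) ∧
    (∫ x : ℝ, x ^ 2 * uTrig σ u₀ t x)
      = σ * Real.tan (2 * σ * t)
        + ((Real.cos (2 * σ * t)) ^ 2)⁻¹
          * (∫ y : ℝ, Real.exp (Real.tan (2 * σ * t) * y ^ 2 / (2 * σ)) * y ^ 2 * u₀ y)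
          / (∫ y : ℝ, Real.exp (Real.tan (2 * σ * t) * y ^ 2 / (2 * σ)) * u₀ y) :=
  second_moment_of_explicit_solution_pos_quadratic_general σ hσ u₀ hnn hmass t ht ht'
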